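/- arXiv:2409.03758 — 4 statements merged into one kernel-verified Lean document; each statement's English description precedes it below -/
import Mathlib

section
/- Let N be a prime and let p, q > 1 be natural numbers such that q divides p or p divides q. Then the number A of pairs (x, y) ∈ (ℤ/Nℤ)² with x^p ≡ y^q (mod N) satisfies A ≤ 1 + min(p, q)·(N − 1). -/
lemma aux_card_le (F : Type*) [Field F] [Fintype F] [DecidableEq F] (p q : ℕ) (hp : 0 < p) (hq : 0 < q) :
    Nat.card {xy : F × F // xy.1 ^ p = xy.2 ^ q} ≤ 1 + p * (Fintype.card F - 1) := by
  classical
  have e : {xy : F × F // xy.1 ^ p = xy.2 ^ q} ≃ Σ y : F, {x : F // x ^ p = y ^ q} :=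
    { toFun := fun s => ⟨s.1.2, ⟨s.1.1, s.2⟩⟩
      invFun := fun s => ⟨(s.2.1, s.1), s.2.2⟩
      left_inv := fun s => rfl
      right_inv := fun s => rfl }
  rw [Nat.card_eq_fintype_card, Fintype.card_congr e, Fintype.card_sigma]
  have hb : ∀ y : F, Fintype.card {x : F // x ^ p = y ^ q} ≤ p := by
    intro y
    calc Fintype.card {x : F // x ^ p = y ^ q}
        = (Finset.univ.filter (fun x : F => x ^ p = y ^ q)).card := Fintype.card_subtype _
      _ ≤ (Polynomial.nthRoots p (y ^ q)).toFinset.card := by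
          apply Finset.card_le_card
          intro x hx
          simp only [Finset.mem_filter] at hx
          rw [Multiset.mem_toFinset, Polynomial.mem_nthRoots hp]
          exact hx.2
      _ ≤ Multiset.card (Polynomial.nthRoots p (y ^ q)) := Multiset.toFinset_card_le _
      _ ≤ p := Polynomial.card_nthRoots p _
  have h0 : Fintype.card {x : F // x ^ p = (0 : F) ^ q} = 1 := by
    rw [Fintype.card_eq_one_iff]
    refine ⟨⟨0, by simp [zero_pow hp.ne', zero_pow hq.ne']⟩, ?_⟩
    rintro ⟨x, hx⟩
    ext
    simpa [zero_pow hq.ne', pow_eq_zero_iff hp.ne'] using hx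
  rw [← Finset.sum_erase_add _ _ (Finset.mem_univ (0 : F)), h0]
  have h2 : ∑ y ∈ Finset.univ.erase (0 : F), Fintype.card {x : F // x ^ p = y ^ q}
      ≤ (Fintype.card F - 1) * p := by
    calc ∑ y ∈ Finset.univ.erase (0 : F), Fintype.card {x : F // x ^ p = y ^ q}
        ≤ (Finset.univ.erase (0 : F)).card * p :=
          Finset.sum_le_card_nsmul _ _ p (fun y _ => hb y)
      _ = (Fintype.card F - 1) * p := by
          rw [Finset.card_erase_of_mem (Finset.mem_univ _), Finset.card_univ]
  rw [mul_comm] at h2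
  omega

theorem stmt_5 (N : ℕ) (hN : N.Prime) (p q : ℕ) (hp : 1 < p) (hq : 1 < q)
    (hdvd : q ∣ p ∨ p ∣ q) :
    Nat.card {xy : ZMod N × ZMod N // xy.1 ^ p = xy.2 ^ q} ≤
      1 + min p q * (N - 1) := by
  haveI := Fact.mk hN
  haveI : NeZero N := ⟨hN.pos.ne'⟩
  have hcard : Fintype.card (ZMod N) = N := ZMod.card N
  rcases le_total p q with h | h
  · rw [min_eq_left h]
    have := aux_card_le (ZMod N) p q (by omega) (by omega)
    rwa [hcard] at this
  · rw [min_eq_right h]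
    have e : {xy : ZMod N × ZMod N // xy.1 ^ p = xy.2 ^ q} ≃
        {xy : ZMod N × ZMod N // xy.1 ^ q = xy.2 ^ p} :=
      { toFun := fun s => ⟨s.1.swap, s.2.symm⟩
        invFun := fun s => ⟨s.1.swap, s.2.symm⟩
        left_inv := fun s => rfl
        right_inv := fun s => rfl }
    rw [Nat.card_congr e]
    have := aux_card_le (ZMod N) q p (by omega) (by omega)
    rwa [hcard] at this
end

section
/- Let N be a prime and let p, q > 1 be natural numbers with q ∣ p or p ∣ q. Then for every k with 1 ≤ k ≤ N−1, the exponential sum S_k^{(p)} = Σ_{x=0}^{N−1} exp(2πi·k·x^p/N) satisfies |S_k^{(p)}|² ≤ 2·N·p². -/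
/-!
Write `S(a) = ∑ₓ ψ(a xᵖ)` for a primitive additive character `ψ` of `F = 𝔽_N`. By
orthogonality, `∑ₐ |S(a)|² = N · #{(x, y) | xᵖ = yᵖ} ≤ p N²`, and removing `S(0) = N` leaves
`∑_{a ≠ 0} |S(a)|² ≤ (p - 1) N²`. Since `S(a tᵖ) = S(a)` for `t ≠ 0`, the value `|S(k)|²` is
taken on all of `{k tᵖ | t ≠ 0}`, a set of at least `(N - 1) / p` elements because each fibre
of `t ↦ k tᵖ` has at most `p` points. Hence `(N - 1) |S(k)|² ≤ p (p - 1) N² ≤ 2 (N - 1) N p²`.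
-/

open Finset

section Domain

variable {R : Type*} [CommRing R] [IsDomain R] [Fintype R] [DecidableEq R] {p : ℕ}

theorem card_filter_pow_eq_le (hp : 0 < p) (c : R) : #{x : R | x ^ p = c} ≤ p :=
  calc #{x : R | x ^ p = c}
      ≤ #(Polynomial.nthRoots p c).toFinset :=
        card_le_card fun x hx => by simpa [Polynomial.mem_nthRoots hp] using hx
    _ ≤ Multiset.card (Polynomial.nthRoots p c) := Multiset.toFinset_card_le _
    _ ≤ p := Polynomial.card_nthRoots p c

theorem card_filter_pow_eq_pow_le (hp : 0 < p) :
    #{xy : R × R | xy.1 ^ p = xy.2 ^ p} ≤ p * Fintype.card R :=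
  calc #{xy : R × R | xy.1 ^ p = xy.2 ^ p} = ∑ y : R, #{x : R | x ^ p = y ^ p} := by
        simp only [card_filter, Fintype.sum_prod_type]
        exact sum_comm
    _ ≤ ∑ _y : R, p := sum_le_sum fun y _ => card_filter_pow_eq_le hp _
    _ = p * Fintype.card R := by simp [mul_comm]

end Domain

noncomputable def monomialSum {R : Type*} [CommRing R] [Fintype R] (ψ : AddChar R ℂ) (p : ℕ)
    (a : R) : ℂ :=
  ∑ x : R, ψ (a * x ^ p)

section Ring

variable {R : Type*} [CommRing R] [Fintype R] {ψ : AddChar R ℂ} {p : ℕ}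

theorem monomialSum_zero : monomialSum ψ p 0 = Fintype.card R := by
  simp [monomialSum]

theorem monomialSum_mul_pow_unit (a : R) (t : Rˣ) :
    monomialSum ψ p (a * (t : R) ^ p) = monomialSum ψ p a :=
  Fintype.sum_bijective _ (Units.mulLeft_bijective t) _ _ fun x => by
    rw [mul_pow, mul_assoc]

theorem norm_sq_monomialSum (a : R) :
    (‖monomialSum ψ p a‖ ^ 2 : ℂ) = ∑ x : R, ∑ y : R, ψ (a * (x ^ p - y ^ p)) := by
  rw [← Complex.mul_conj', monomialSum, map_sum, Fintype.sum_mul_sum]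
  refine sum_congr rfl fun x _ => sum_congr rfl fun y _ => ?_
  rw [← AddChar.map_neg_eq_conj, ← AddChar.map_add_eq_mul, mul_sub, sub_eq_add_neg]

theorem sum_norm_sq_monomialSum [DecidableEq R] (hψ : ψ.IsPrimitive) :
    ∑ a : R, ‖monomialSum ψ p a‖ ^ 2 =
      Fintype.card R * #{xy : R × R | xy.1 ^ p = xy.2 ^ p} := by
  suffices h : ∑ a : R, (‖monomialSum ψ p a‖ ^ 2 : ℂ)
      = Fintype.card R * #{xy : R × R | xy.1 ^ p = xy.2 ^ p} by exact_mod_cast h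
  calc ∑ a : R, (‖monomialSum ψ p a‖ ^ 2 : ℂ)
      = ∑ x : R, ∑ y : R, ∑ a : R, ψ (a * (x ^ p - y ^ p)) := by
        simp only [norm_sq_monomialSum]
        rw [sum_comm]
        exact sum_congr rfl fun x _ => sum_comm
    _ = ∑ xy : R × R, if xy.1 ^ p = xy.2 ^ p then (Fintype.card R : ℂ) else 0 := by
        simp only [AddChar.sum_mulShift _ hψ, sub_eq_zero, Fintype.sum_prod_type, apply_ite,
          Nat.cast_zero]
    _ = Fintype.card R * #{xy : R × R | xy.1 ^ p = xy.2 ^ p} := by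
        rw [sum_ite, sum_const_zero, add_zero, sum_const, nsmul_eq_mul, mul_comm]

end Ring

section Field

variable {F : Type*} [Field F] [Fintype F] [DecidableEq F] {ψ : AddChar F ℂ} {p : ℕ}

theorem sum_erase_zero_norm_sq_monomialSum_le (hψ : ψ.IsPrimitive) (hp : 0 < p) :
    ∑ b ∈ univ.erase 0, ‖monomialSum ψ p b‖ ^ 2 ≤
      (p - 1) * (Fintype.card F : ℝ) ^ 2 := by
  have hcount : (#{xy : F × F | xy.1 ^ p = xy.2 ^ p} : ℝ) ≤ p * Fintype.card F := by
    exact_mod_cast card_filter_pow_eq_pow_le (R := F) hp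
  rw [sum_erase_eq_sub (mem_univ 0), sum_norm_sq_monomialSum hψ, monomialSum_zero]
  have hscaled := mul_le_mul_of_nonneg_left hcount (Nat.cast_nonneg (Fintype.card F))
  simp only [Complex.norm_natCast]
  linarith

theorem card_sub_one_le_mul_card_image_mul_pow {a : F} (ha : a ≠ 0) (hp : 0 < p) :
    Fintype.card F - 1 ≤ p * #((univ.erase 0).image fun t : F => a * t ^ p) := by
  rw [← card_univ, ← card_erase_of_mem (mem_univ 0)]
  refine card_le_mul_card_image _ p fun b _ => ?_
  refine (card_le_card fun t ht => ?_).trans (card_filter_pow_eq_le hp (a⁻¹ * b))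
  simp only [mem_filter, mem_univ, true_and, mem_erase] at ht ⊢
  rw [← ht.2, inv_mul_cancel_left₀ ha]

theorem card_sub_one_mul_norm_sq_monomialSum_le (hψ : ψ.IsPrimitive) (hp : 0 < p) {a : F}
    (ha : a ≠ 0) :
    (Fintype.card F - 1 : ℝ) * ‖monomialSum ψ p a‖ ^ 2 ≤
      p * (p - 1) * (Fintype.card F : ℝ) ^ 2 := by
  set orbit := (univ.erase 0).image fun t : F => a * t ^ p
  have hconst : ∀ b ∈ orbit, ‖monomialSum ψ p b‖ ^ 2 = ‖monomialSum ψ p a‖ ^ 2 := by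
    simp only [orbit, mem_image, mem_erase, mem_univ, and_true]
    rintro _ ⟨t, ht, rfl⟩
    rw [← Units.val_mk0 ht, monomialSum_mul_pow_unit]
  have horbit :
      (#orbit : ℝ) * ‖monomialSum ψ p a‖ ^ 2 ≤ (p - 1) * (Fintype.card F : ℝ) ^ 2 := by
    calc (#orbit : ℝ) * ‖monomialSum ψ p a‖ ^ 2
        = ∑ b ∈ orbit, ‖monomialSum ψ p b‖ ^ 2 := by
          rw [sum_congr rfl hconst, sum_const, nsmul_eq_mul]
      _ ≤ ∑ b ∈ univ.erase 0, ‖monomialSum ψ p b‖ ^ 2 := by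
          refine sum_le_sum_of_subset_of_nonneg ?_ fun _ _ _ => by positivity
          simp only [orbit, image_subset_iff, mem_erase, mem_univ, and_true]
          exact fun t ht => mul_ne_zero ha (pow_ne_zero p ht)
      _ ≤ (p - 1) * (Fintype.card F : ℝ) ^ 2 := sum_erase_zero_norm_sq_monomialSum_le hψ hp
  have hcard : (Fintype.card F - 1 : ℝ) ≤ p * #orbit := by
    rw [← Nat.cast_one, ← Nat.cast_sub Fintype.card_pos, ← Nat.cast_mul]
    exact_mod_cast card_sub_one_le_mul_card_image_mul_pow ha hp
  calc (Fintype.card F - 1 : ℝ) * ‖monomialSum ψ p a‖ ^ 2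
      ≤ p * #orbit * ‖monomialSum ψ p a‖ ^ 2 := by gcongr
    _ = p * (#orbit * ‖monomialSum ψ p a‖ ^ 2) := mul_assoc _ _ _
    _ ≤ p * ((p - 1) * (Fintype.card F : ℝ) ^ 2) := by gcongr
    _ = p * (p - 1) * (Fintype.card F : ℝ) ^ 2 := (mul_assoc _ _ _).symm

end Field

theorem sum_range_exp_eq_monomialSum (N : ℕ) [NeZero N] (p k : ℕ) :
    ∑ x ∈ range N, Complex.exp (2 * Real.pi * Complex.I * k * (x ^ p) / N) =
      monomialSum ZMod.stdAddChar p (k : ZMod N) := by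
  refine sum_nbij' (fun x : ℕ => (x : ZMod N)) ZMod.val (fun _ _ => mem_univ _)
    (fun a _ => mem_range.mpr a.val_lt) (fun x hx => ZMod.val_natCast_of_lt (mem_range.mp hx))
    (fun a _ => ZMod.natCast_zmod_val a) fun x _ => ?_
  have hcast : (k : ZMod N) * (x : ZMod N) ^ p = ((k * x ^ p : ℕ) : ℤ) := by push_cast; rfl
  rw [hcast, ZMod.stdAddChar_coe]
  push_cast
  ring_nf

theorem stmt_8_general (N : ℕ) (hN : N.Prime) (p : ℕ) (hp : 1 < p)
    (k : ℕ) (hk1 : 1 ≤ k) (hk2 : k ≤ N - 1) :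
    ‖(∑ x ∈ Finset.range N, Complex.exp (2 * Real.pi * Complex.I * k * (x ^ p) / N))‖ ^ 2 ≤
      2 * N * p ^ 2 := by
  have := Fact.mk hN
  have hk : (k : ZMod N) ≠ 0 := by
    rw [Ne, ZMod.natCast_eq_zero_iff]
    exact fun hdvd => absurd (Nat.le_of_dvd hk1 hdvd) (by omega)
  have key := card_sub_one_mul_norm_sq_monomialSum_le (ZMod.isPrimitive_stdAddChar N)
    (by omega : 0 < p) hk
  rw [ZMod.card] at key
  rw [sum_range_exp_eq_monomialSum]
  set s := ‖monomialSum ZMod.stdAddChar p (k : ZMod N)‖ ^ 2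
  have hN2 : (2 : ℝ) ≤ N := by exact_mod_cast hN.two_le
  have hp1 : (1 : ℝ) ≤ p := by exact_mod_cast hp.le
  refine le_of_mul_le_mul_left (a := (N - 1 : ℝ)) ?_ (by linarith)
  calc (N - 1 : ℝ) * s ≤ p * (p - 1) * N ^ 2 := key
    _ ≤ (N - 1) * (2 * N * p ^ 2) := by
        nlinarith [mul_nonneg (by linarith : (0 : ℝ) ≤ N - 2) (by linarith : (0 : ℝ) ≤ p)]

theorem stmt_8 (N : ℕ) (hN : N.Prime) (p q : ℕ) (hp : 1 < p) (hq : 1 < q)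
    (hdvd : q ∣ p ∨ p ∣ q) (k : ℕ) (hk1 : 1 ≤ k) (hk2 : k ≤ N - 1) :
    ‖(∑ x ∈ Finset.range N, Complex.exp (2 * Real.pi * Complex.I * k * (x ^ p) / N))‖ ^ 2 ≤
      2 * N * p ^ 2 :=
  stmt_8_general N hN p hp k hk1 hk2
end

section
/- Let p, q, r be natural numbers greater than 1 such that (q ∣ r or r ∣ q), (p ∣ r or r ∣ p), and (q ∣ p or p ∣ q). Then for every prime N with N > 32·p²·q²·r², there exist positive integers x, y, z with x^p + y^q ≡ z^r (mod N) and N does not divide x·y·z. -/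
/-!
Take `y = 1`; it suffices to find units `t, w` of `𝔽_N` with `tᵖ + 1 = wʳ`. Let `χ`, `ψ` be
complex characters of `𝔽_N` of orders `d = gcd(p, N - 1)` and `e = gcd(r, N - 1)`. In the cyclic
group `𝔽_Nˣ`, the `p`-th powers are exactly the kernel of `χ`, and `∑_{j<d} χʲ(u)` vanishes
unless `u` is a unit with `χ(u) = 1`. Hence a nonzero term in
`∑_u (∑_{j<d} χʲ(u)) (∑_{k<e} ψᵏ(1 + u))` produces `u = tᵖ` and `1 + u = wʳ`. Expanding, the sum
is `∑_{j,k} χʲ(-1) J(χʲ, ψᵏ)`: the pair `(0, 0)` contributes `N - 2`, every other Jacobi sum has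
absolute value at most `√N`, and `d e √N ≤ p r √N < N - 2` once `N > 32 p² r²`.
-/

open Finset

theorem exists_pow_eq_of_map_eq_one {G H : Type*} [Group G] [Finite G] [Group H] (f : G →* H)
    {g : G} (hg : ∀ x, x ∈ Subgroup.zpowers g) {m : ℕ}
    (hm : m.gcd (Nat.card G) ∣ orderOf (f g)) {u : G} (hu : f u = 1) : ∃ t, t ^ m = u := by
  obtain ⟨k, rfl⟩ := Subgroup.mem_zpowers_iff.mp (hg u)
  have hk : (orderOf (f g) : ℤ) ∣ k := orderOf_dvd_iff_zpow_eq_one.mpr (by rwa [← map_zpow])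
  obtain ⟨l, rfl⟩ := (Int.natCast_dvd_natCast.mpr hm).trans hk
  refine ⟨g ^ (m.gcdA (Nat.card G) * l), ?_⟩
  rw [Nat.gcd_eq_gcd_ab, add_mul, zpow_add, mul_assoc (Nat.card G : ℤ), zpow_mul g (Nat.card G),
    zpow_natCast, pow_card_eq_one', one_zpow, mul_one, ← zpow_natCast, ← zpow_mul]
  ring_nf

namespace MulChar

lemma orderOf_dvd_orderOf_equivToUnitHom_apply {M R : Type*} [CommMonoid M]
    [CommMonoidWithZero R] (χ : MulChar M R) {g : Mˣ} (hg : ∀ x, x ∈ Subgroup.zpowers g) :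
    orderOf χ ∣ orderOf (equivToUnitHom χ g) :=
  orderOf_dvd_of_pow_eq_one <| (eq_iff hg _ _).mpr <| by
    rw [pow_apply_coe, one_apply_coe, ← coe_equivToUnitHom, ← Units.val_pow_eq_pow_val,
      pow_orderOf_eq_one, Units.val_one]

lemma isUnit_and_apply_eq_one_of_sum_pow_ne_zero {M R : Type*} [CommMonoid M] [CommRing R]
    [IsDomain R] (χ : MulChar M R) {a : M} (h : ∑ j ∈ range (orderOf χ), (χ ^ j) a ≠ 0) :
    IsUnit a ∧ χ a = 1 := by
  have ha : IsUnit a := by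
    by_contra ha
    exact h (sum_eq_zero fun j _ ↦ map_nonunit _ ha)
  obtain ⟨u, rfl⟩ := ha
  refine ⟨u.isUnit, by_contra fun hu ↦ h ?_⟩
  have hgeom := geom_sum_mul (χ u) (orderOf χ)
  rw [← pow_apply_coe, pow_orderOf_eq_one, one_apply_coe, sub_self] at hgeom
  simpa only [pow_apply_coe] using (mul_eq_zero.mp hgeom).resolve_right (sub_ne_zero.mpr hu)

lemma norm_apply_units {M : Type*} [CommRing M] [Finite Mˣ] (χ : MulChar M ℂ) (a : Mˣ) :
    ‖χ a‖ = 1 := by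
  cases nonempty_fintype Mˣ
  rw [← coe_equivToUnitHom]
  exact Complex.norm_eq_one_of_mem_rootsOfUnity (χ.apply_mem_rootsOfUnity a)

lemma norm_apply_neg_one {M : Type*} [CommRing M] [Finite Mˣ] (χ : MulChar M ℂ) :
    ‖χ (-1)‖ = 1 := by
  simpa using χ.norm_apply_units (-1)

lemma sum_apply_mul_apply_one_add {F R : Type*} [CommRing F] [Fintype F] [CommRing R]
    (χ ψ : MulChar F R) : ∑ u, χ u * ψ (1 + u) = χ (-1) * jacobiSum χ ψ := by
  rw [jacobiSum, mul_sum]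
  refine Fintype.sum_equiv (Equiv.neg F) _ _ fun u ↦ ?_
  rw [Equiv.neg_apply, sub_neg_eq_add, ← mul_assoc, ← map_mul, neg_mul_neg, one_mul]

end MulChar

lemma Finset.sum_ne_zero_of_sum_norm_erase_lt {ι E : Type*} [SeminormedAddCommGroup E]
    [DecidableEq ι] {s : Finset ι} {a : ι} (ha : a ∈ s) {f : ι → E}
    (h : ∑ i ∈ s.erase a, ‖f i‖ < ‖f a‖) : ∑ i ∈ s, f i ≠ 0 := by
  rw [← add_sum_erase s f ha]
  intro h0
  rw [eq_neg_of_add_eq_zero_left h0, norm_neg] at h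
  exact (norm_sum_le _ _).not_gt h

lemma mul_sqrt_lt_sub_two {x y : ℝ} (hx : 1 ≤ x) (h : 32 * x ^ 2 < y) : x * √y < y - 2 := by
  have hy : 0 < y := by nlinarith
  have hsq : √y ^ 2 = y := Real.sq_sqrt hy.le
  have h5 : 5 * x < √y := by nlinarith [Real.sqrt_nonneg y]
  nlinarith

section FiniteField

variable {F : Type*} [Field F] [Fintype F]

lemma MulChar.exists_pow_eq_of_apply_eq_one {R : Type*} [CommMonoidWithZero R]
    (χ : MulChar F R) {m : ℕ} (hχ : orderOf χ = m.gcd (Fintype.card F - 1)) {u : Fˣ}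
    (hu : χ u = 1) : ∃ t : Fˣ, t ^ m = u := by
  classical
  obtain ⟨g, hg⟩ := IsCyclic.exists_generator (α := Fˣ)
  refine exists_pow_eq_of_map_eq_one (equivToUnitHom χ) hg ?_ (Units.ext ?_)
  · rw [Nat.card_eq_fintype_card, Fintype.card_units, ← hχ]
    exact χ.orderOf_dvd_orderOf_equivToUnitHom_apply hg
  · rw [coe_equivToUnitHom, hu, Units.val_one]

lemma MulChar.exists_orderOf_eq_gcd (m : ℕ) (hm : m ≠ 0) :
    ∃ χ : MulChar F ℂ, orderOf χ = m.gcd (Fintype.card F - 1) :=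
  exists_mulChar_orderOf F (Nat.gcd_dvd_right _ _)
    (Complex.isPrimitiveRoot_exp _ (Nat.gcd_ne_zero_left hm))

lemma one_le_sqrt_card : (1 : ℝ) ≤ √(Fintype.card F) :=
  Real.one_le_sqrt.mpr (by exact_mod_cast Fintype.card_pos)

lemma norm_jacobiSum_eq_sqrt {χ ψ : MulChar F ℂ} (hχ : χ ≠ 1) (hψ : ψ ≠ 1) (hχψ : χ * ψ ≠ 1) :
    ‖jacobiSum χ ψ‖ = √(Fintype.card F) := by
  have hchar : ringChar ℂ ≠ ringChar F := by
    rw [ringChar.eq_zero]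
    exact (CharP.char_is_prime F (ringChar F)).ne_zero.symm
  have h := jacobiSum_mul_jacobiSum_inv hchar hχ hψ hχψ
  rw [← MulChar.star_eq_inv, ← MulChar.star_eq_inv,
    show jacobiSum (star χ) (star ψ) = starRingEnd ℂ (jacobiSum χ ψ) from
      jacobiSum_ringHomComp χ ψ _, Complex.mul_conj] at h
  rw [Complex.norm_def, show Complex.normSq (jacobiSum χ ψ) = Fintype.card F by exact_mod_cast h]

lemma norm_jacobiSum_le_sqrt {χ ψ : MulChar F ℂ} (h : χ ≠ 1 ∨ ψ ≠ 1) :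
    ‖jacobiSum χ ψ‖ ≤ √(Fintype.card F) := by
  rcases eq_or_ne χ 1 with rfl | hχ
  · rw [jacobiSum_one_nontrivial (h.resolve_left (not_not.mpr rfl)), norm_neg, norm_one]
    exact one_le_sqrt_card
  rcases eq_or_ne ψ 1 with rfl | hψ
  · rw [jacobiSum_comm, jacobiSum_one_nontrivial hχ, norm_neg, norm_one]
    exact one_le_sqrt_card
  rcases eq_or_ne (χ * ψ) 1 with hχψ | hχψ
  · rw [eq_inv_of_mul_eq_one_right hχψ, jacobiSum_nontrivial_inv hχ, norm_neg,
      MulChar.norm_apply_neg_one]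
    exact one_le_sqrt_card
  · exact (norm_jacobiSum_eq_sqrt hχ hψ hχψ).le

lemma sum_sum_pow_apply_mul_sum_pow_apply {R : Type*} [CommRing R] (χ ψ : MulChar F R)
    (d e : ℕ) :
    ∑ u, (∑ j ∈ range d, (χ ^ j) u) * ∑ k ∈ range e, (ψ ^ k) (1 + u) =
      ∑ jk ∈ range d ×ˢ range e, (χ ^ jk.1) (-1) * jacobiSum (χ ^ jk.1) (ψ ^ jk.2) := by
  simp_rw [sum_mul_sum, sum_product, ← MulChar.sum_apply_mul_apply_one_add]
  rw [sum_comm]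
  exact sum_congr rfl fun j _ ↦ sum_comm

lemma sum_sum_pow_apply_mul_sum_pow_apply_ne_zero (χ ψ : MulChar F ℂ)
    (h : orderOf χ * orderOf ψ * √(Fintype.card F) < Fintype.card F - 2) :
    ∑ u, (∑ j ∈ range (orderOf χ), (χ ^ j) u) * ∑ k ∈ range (orderOf ψ), (ψ ^ k) (1 + u) ≠ 0 := by
  rw [sum_sum_pow_apply_mul_sum_pow_apply]
  have hmem : ((0, 0) : ℕ × ℕ) ∈ range (orderOf χ) ×ˢ range (orderOf ψ) := by
    simp [χ.orderOf_pos, ψ.orderOf_pos]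
  refine sum_ne_zero_of_sum_norm_erase_lt hmem ?_
  have hq : (0 : ℝ) ≤ Fintype.card F - 2 := by
    refine le_trans ?_ h.le
    positivity
  have hT : ‖(χ ^ 0) (-1) * jacobiSum (χ ^ 0) (ψ ^ 0)‖ = Fintype.card F - 2 := by
    rw [pow_zero, pow_zero, MulChar.one_apply isUnit_one.neg, one_mul, jacobiSum_one_one,
      ← Complex.ofReal_natCast, ← Complex.ofReal_ofNat, ← Complex.ofReal_sub,
      Complex.norm_of_nonneg hq]
  rw [hT]
  refine lt_of_le_of_lt ?_ h
  calc ∑ jk ∈ (range (orderOf χ) ×ˢ range (orderOf ψ)).erase (0, 0),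
        ‖(χ ^ jk.1) (-1) * jacobiSum (χ ^ jk.1) (ψ ^ jk.2)‖
      ≤ ∑ _jk ∈ (range (orderOf χ) ×ˢ range (orderOf ψ)).erase (0, 0), √(Fintype.card F) := by
        refine sum_le_sum fun ⟨j, k⟩ hjk ↦ ?_
        obtain ⟨hne, hjk⟩ := mem_erase.mp hjk
        rw [mem_product, mem_range, mem_range] at hjk
        rw [norm_mul, MulChar.norm_apply_neg_one, one_mul]
        refine norm_jacobiSum_le_sqrt ?_
        obtain hj | hk : j ≠ 0 ∨ k ≠ 0 := by simpa [imp_iff_not_or] using hne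
        · exact .inl (pow_ne_one_of_lt_orderOf hj hjk.1)
        · exact .inr (pow_ne_one_of_lt_orderOf hk hjk.2)
    _ ≤ orderOf χ * orderOf ψ * √(Fintype.card F) := by
        rw [sum_const, nsmul_eq_mul]
        gcongr
        exact_mod_cast card_erase_le.trans (by simp)

theorem exists_units_pow_add_one_eq_pow {p r : ℕ} (hp : p ≠ 0) (hr : r ≠ 0)
    (h : 32 * p ^ 2 * r ^ 2 < Fintype.card F) :
    ∃ t w : Fˣ, (t : F) ^ p + 1 = (w : F) ^ r := by
  obtain ⟨χ, hχ⟩ := MulChar.exists_orderOf_eq_gcd (F := F) p hp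
  obtain ⟨ψ, hψ⟩ := MulChar.exists_orderOf_eq_gcd (F := F) r hr
  have hbound : orderOf χ * orderOf ψ * √(Fintype.card F) < Fintype.card F - 2 := by
    have hχp : (orderOf χ : ℝ) ≤ p := by
      exact_mod_cast hχ ▸ Nat.gcd_le_left _ (Nat.pos_of_ne_zero hp)
    have hψr : (orderOf ψ : ℝ) ≤ r := by
      exact_mod_cast hψ ▸ Nat.gcd_le_left _ (Nat.pos_of_ne_zero hr)
    calc (orderOf χ * orderOf ψ : ℝ) * √(Fintype.card F) ≤ (p * r) * √(Fintype.card F) := by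
          gcongr
      _ < Fintype.card F - 2 := by
          refine mul_sqrt_lt_sub_two ?_ ?_
          · exact_mod_cast Nat.one_le_iff_ne_zero.mpr (mul_ne_zero hp hr)
          · rw [mul_pow, ← mul_assoc]
            exact_mod_cast h
  obtain ⟨u, -, hS⟩ := exists_ne_zero_of_sum_ne_zero
    (sum_sum_pow_apply_mul_sum_pow_apply_ne_zero χ ψ hbound)
  obtain ⟨hu, hχu⟩ := χ.isUnit_and_apply_eq_one_of_sum_pow_ne_zero (left_ne_zero_of_mul hS)
  obtain ⟨hv, hψv⟩ := ψ.isUnit_and_apply_eq_one_of_sum_pow_ne_zero (right_ne_zero_of_mul hS)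
  obtain ⟨t, ht⟩ := χ.exists_pow_eq_of_apply_eq_one hχ (u := hu.unit) (by simpa)
  obtain ⟨w, hw⟩ := ψ.exists_pow_eq_of_apply_eq_one hψ (u := hv.unit) (by simpa)
  refine ⟨t, w, ?_⟩
  rw [← Units.val_pow_eq_pow_val, ht, ← Units.val_pow_eq_pow_val, hw, IsUnit.unit_spec,
    IsUnit.unit_spec, add_comm]

end FiniteField

theorem stmt_14_general (p q r : ℕ) (hp : 1 < p) (hq : 1 < q) (hr : 1 < r)
    (N : ℕ) (hN : N.Prime) (hbig : 32 * p ^ 2 * q ^ 2 * r ^ 2 < N) :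
    ∃ x y z : ℕ, 0 < x ∧ 0 < y ∧ 0 < z ∧
      (x ^ p + y ^ q) % N = z ^ r % N ∧ ¬ N ∣ x * y * z := by
  have := Fact.mk hN
  have hpr : 32 * p ^ 2 * r ^ 2 < Fintype.card (ZMod N) := by
    rw [ZMod.card]
    refine lt_of_le_of_lt ?_ hbig
    calc 32 * p ^ 2 * r ^ 2 = 32 * p ^ 2 * 1 * r ^ 2 := by ring
      _ ≤ 32 * p ^ 2 * q ^ 2 * r ^ 2 := by gcongr; exact Nat.one_le_pow _ _ (by omega)
  obtain ⟨t, w, htw⟩ := exists_units_pow_add_one_eq_pow (by omega) (by omega) hpr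
  refine ⟨(t : ZMod N).val, 1, (w : ZMod N).val, ZMod.val_pos.mpr t.ne_zero, one_pos,
    ZMod.val_pos.mpr w.ne_zero, ?_, ?_⟩
  · rw [← ZMod.natCast_eq_natCast_iff']
    push_cast
    rw [ZMod.natCast_zmod_val, ZMod.natCast_zmod_val, one_pow, htw]
  · rw [← ZMod.natCast_eq_zero_iff]
    push_cast
    rw [ZMod.natCast_zmod_val, ZMod.natCast_zmod_val, mul_one]
    exact mul_ne_zero t.ne_zero w.ne_zero

theorem stmt_14 (p q r : ℕ) (hp : 1 < p) (hq : 1 < q) (hr : 1 < r)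
    (h1 : q ∣ r ∨ r ∣ q) (h2 : p ∣ r ∨ r ∣ p) (h3 : q ∣ p ∨ p ∣ q)
    (N : ℕ) (hN : N.Prime) (hbig : 32 * p ^ 2 * q ^ 2 * r ^ 2 < N) :
    ∃ x y z : ℕ, 0 < x ∧ 0 < y ∧ 0 < z ∧
      (x ^ p + y ^ q) % N = z ^ r % N ∧ ¬ N ∣ x * y * z :=
  stmt_14_general p q r hp hq hr N hN hbig
end

section
/- Let N be a prime and p, q, r natural numbers greater than 1 with (q ∣ r or r ∣ q), (p ∣ r or r ∣ p), (q ∣ p or p ∣ q). Then the number of triples (x, y, z) ∈ (ℤ/Nℤ)³ with x^p + y^q ≡ z^r (mod N) and N ∣ x·y·z is at most 1 + (min(q,r) + min(p,r) + min(p,q))·(N − 1). -/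
/-!
A trivial solution has a zero coordinate. If it is not the origin, the equation forces the other
two coordinates to be nonzero and to satisfy a two-term equation `u ^ a = c * v ^ b` with `c = ±1`.
Fixing either `v` or `u`, the other one is a root of a polynomial of degree `a` resp. `b`, so each
coordinate plane carries at most `min a b * (N - 1)` trivial solutions.
-/

open Finset Polynomial

theorem Polynomial.card_nthRootsFinset_le {R : Type*} [CommRing R] [IsDomain R] (n : ℕ) (a : R) :
    #(nthRootsFinset n a) ≤ n := by
  classical
  rw [nthRootsFinset_def]
  exact (Multiset.toFinset_card_le _).trans (card_nthRoots n a)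

theorem card_filter_pow_eq_le_s15 {R : Type*} [CommRing R] [IsDomain R] [Fintype R] [DecidableEq R]
    {n : ℕ} (hn : 0 < n) (g : R → R) (s : Finset R) :
    #{x ∈ (univ : Finset R) ×ˢ s | x.1 ^ n = g x.2} ≤ n * #s := by
  refine card_le_mul_card_image_of_maps_to (f := Prod.snd) (fun x hx => ?_) n fun v _ => ?_
  · exact (mem_product.1 (mem_filter.1 hx).1).2
  · calc #{x ∈ {x ∈ (univ : Finset R) ×ˢ s | x.1 ^ n = g x.2} | x.2 = v}
        ≤ #(nthRootsFinset n (g v)) := by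
          refine card_le_card_of_injOn Prod.fst (fun x hx => ?_) fun x hx y hy hxy => ?_
          · simp only [mem_coe, mem_filter] at hx
            rw [mem_coe, mem_nthRootsFinset hn, hx.1.2, hx.2]
          · simp only [mem_coe, mem_filter] at hx hy
            exact Prod.ext hxy (hx.2.trans hy.2.symm)
      _ ≤ n := card_nthRootsFinset_le n (g v)

section TrivialSolutions

variable {K : Type*} [Field K] [Fintype K] [DecidableEq K]

def nonzeroSolutions (a b : ℕ) (c : K) : Finset (K × K) :=
  {x | x.1 ≠ 0 ∧ x.2 ≠ 0 ∧ x.1 ^ a = c * x.2 ^ b}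

theorem eq_zero_or_mem_nonzeroSolutions {a b : ℕ} (ha : 0 < a) (hb : 0 < b) {c : K} (hc : c ≠ 0)
    {u v : K} (h : u ^ a = c * v ^ b) : (u = 0 ∧ v = 0) ∨ (u, v) ∈ nonzeroSolutions a b c := by
  have huv : u = 0 ↔ v = 0 := by
    rw [← pow_eq_zero_iff ha.ne', h, mul_eq_zero, or_iff_right hc, pow_eq_zero_iff hb.ne']
  by_cases hu : u = 0
  · exact Or.inl ⟨hu, huv.1 hu⟩
  · exact Or.inr (by simpa [nonzeroSolutions, hu, huv.not.1 hu] using h)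

theorem card_nonzeroSolutions_le {a b : ℕ} (ha : 0 < a) (hb : 0 < b) {c : K} (hc : c ≠ 0) :
    #(nonzeroSolutions a b c) ≤ min a b * (Fintype.card K - 1) := by
  rw [← card_univ, ← card_erase_of_mem (mem_univ (0 : K))]
  rcases le_total a b with hab | hba
  · rw [min_eq_left hab]
    refine le_trans (card_le_card fun x hx => ?_) (card_filter_pow_eq_le_s15 ha (c * · ^ b) _)
    simp only [nonzeroSolutions, mem_filter, mem_univ, true_and] at hx
    simp [hx]
  · rw [min_eq_right hba]
    refine le_trans (card_le_card_of_injOn Prod.swap (fun x hx => ?_) Prod.swap_injective.injOn)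
      (card_filter_pow_eq_le_s15 hb (c⁻¹ * · ^ a) _)
    simp only [nonzeroSolutions, mem_coe, mem_filter, mem_univ, true_and] at hx
    simp [hx, eq_inv_mul_iff_mul_eq₀ hc]

def trivialSolutions (p q r : ℕ) : Finset (K × K × K) :=
  {xyz | xyz.1 ^ p + xyz.2.1 ^ q = xyz.2.2 ^ r ∧ xyz.1 * xyz.2.1 * xyz.2.2 = 0}

variable {p q r : ℕ}

theorem trivialSolutions_subset (hp : 0 < p) (hq : 0 < q) (hr : 0 < r) :
    trivialSolutions p q r ⊆ insert 0
      ((nonzeroSolutions q r (1 : K)).image (fun yz => (0, yz.1, yz.2)) ∪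
        (nonzeroSolutions p r (1 : K)).image (fun xz => (xz.1, 0, xz.2)) ∪
        (nonzeroSolutions p q (-1 : K)).image (fun xy => (xy.1, xy.2, 0))) := by
  rintro ⟨x, y, z⟩ hxyz
  simp only [trivialSolutions, mem_filter, mem_univ, true_and, mul_eq_zero] at hxyz
  obtain ⟨heq, (rfl | rfl) | rfl⟩ := hxyz
  · have h : y ^ q = 1 * z ^ r := by simpa [zero_pow hp.ne'] using heq
    obtain ⟨rfl, rfl⟩ | hyz := eq_zero_or_mem_nonzeroSolutions hq hr one_ne_zero h
    · exact mem_insert_self _ _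
    · exact mem_insert_of_mem (mem_union_left _ (mem_union_left _ (mem_image_of_mem _ hyz)))
  · have h : x ^ p = 1 * z ^ r := by simpa [zero_pow hq.ne'] using heq
    obtain ⟨rfl, rfl⟩ | hxz := eq_zero_or_mem_nonzeroSolutions hp hr one_ne_zero h
    · exact mem_insert_self _ _
    · exact mem_insert_of_mem (mem_union_left _ (mem_union_right _ (mem_image_of_mem _ hxz)))
  · have h : x ^ p = -1 * y ^ q := by
      rw [zero_pow hr.ne'] at heq
      linear_combination heq
    obtain ⟨rfl, rfl⟩ | hxy :=
      eq_zero_or_mem_nonzeroSolutions hp hq (neg_ne_zero.2 one_ne_zero) h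
    · exact mem_insert_self _ _
    · exact mem_insert_of_mem (mem_union_right _ (mem_image_of_mem _ hxy))

theorem card_trivialSolutions_le (hp : 0 < p) (hq : 0 < q) (hr : 0 < r) :
    #(trivialSolutions (K := K) p q r) ≤
      1 + (min q r + min p r + min p q) * (Fintype.card K - 1) := by
  have hA := card_nonzeroSolutions_le (K := K) hq hr one_ne_zero
  have hB := card_nonzeroSolutions_le (K := K) hp hr one_ne_zero
  have hC := card_nonzeroSolutions_le (K := K) hp hq (neg_ne_zero.2 one_ne_zero)
  grw [trivialSolutions_subset hp hq hr, card_insert_le, card_union_le, card_union_le,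
    card_image_le, card_image_le, card_image_le, hA, hB, hC]
  rw [add_mul, add_mul, add_comm]

end TrivialSolutions

theorem stmt_15_general (N : ℕ) (hN : N.Prime) (p q r : ℕ) (hp : 1 < p) (hq : 1 < q) (hr : 1 < r) :
    Nat.card {xyz : ZMod N × ZMod N × ZMod N //
        xyz.1 ^ p + xyz.2.1 ^ q = xyz.2.2 ^ r ∧ xyz.1 * xyz.2.1 * xyz.2.2 = 0} ≤
      1 + (min q r + min p r + min p q) * (N - 1) := by
  have : Fact N.Prime := ⟨hN⟩
  rw [Nat.card_eq_fintype_card, Fintype.card_subtype]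
  have h := card_trivialSolutions_le (K := ZMod N) (by omega : 0 < p) (by omega : 0 < q)
    (by omega : 0 < r)
  rwa [ZMod.card] at h

theorem stmt_15 (N : ℕ) (hN : N.Prime) (p q r : ℕ) (hp : 1 < p) (hq : 1 < q) (hr : 1 < r)
    (h1 : q ∣ r ∨ r ∣ q) (h2 : p ∣ r ∨ r ∣ p) (h3 : q ∣ p ∨ p ∣ q) :
    Nat.card {xyz : ZMod N × ZMod N × ZMod N //
        xyz.1 ^ p + xyz.2.1 ^ q = xyz.2.2 ^ r ∧ xyz.1 * xyz.2.1 * xyz.2.2 = 0} ≤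
      1 + (min q r + min p r + min p q) * (N - 1) :=
  stmt_15_general N hN p q r hp hq hr
end
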